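/- (Lagrange inversion.) Let u ∈ ℚ⟦X⟧ be a formal power series with nonzero constant coefficient (hence invertible), let H = X·u (a power series of valuation 1), and let G ∈ ℚ⟦X⟧ be a power series with zero constant coefficient satisfying G(H(X)) = X (i.e., substituting H into G gives X). Then for all natural numbers n and k with 1 ≤ k ≤ n, one has n·[Xⁿ](G^k) = k·[X^{n−k}](u^{−n}), where [X^m] denotes the m-th coefficient. (Equivalently, [xⁿ]G^k = (k/n)[x^{−k}]H^{−n}.) -/

import Mathlib

/-!
Write `H = X·u` and `v = u⁻¹`, and let `cₘ = [Xᵐ] G^k`. Since `G^k(H) = X^k`, the truncation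
`T = ∑_{m ≤ n} cₘ Hᵐ` agrees with `X^k` modulo `X^{n+1}`, so `T'` agrees with `k X^{k-1}` modulo
`Xⁿ`. Take the coefficient of `X^{n-1}` in `T' vⁿ`, i.e. the residue of `T' / Hⁿ`. The residue of
`(Hᵐ)' / Hⁿ` is `n·δₘₙ`: for `m < n` it is `m/(m-n)` times the residue of the exact derivative
`(H^{m-n})'`. Hence the left side is `n·cₙ`, while the right side is `k·[X^{n-k}] vⁿ`.
-/

/-- Composition `f ∘ g` of formal power series: substituting `g` (which is intended to
have zero constant coefficient) for the variable of `f`. -/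
noncomputable def psComp (f g : PowerSeries ℚ) : PowerSeries ℚ :=
  PowerSeries.mk fun n =>
    ∑ k ∈ Finset.range (n + 1), PowerSeries.coeff k f * PowerSeries.coeff n (g ^ k)

open PowerSeries Finset

namespace PowerSeries

section CommSemiring

variable {R : Type*} [CommSemiring R]

theorem coeff_pow_eq_zero_of_lt {g : R⟦X⟧} (hg : constantCoeff g = 0) {i n : ℕ} (h : n < i) :
    coeff n (g ^ i) = 0 :=
  X_pow_dvd_iff.mp (pow_dvd_pow_of_dvd (X_dvd_iff.mpr hg) i) n h

theorem coeff_X_mul_derivative (f : R⟦X⟧) (n : ℕ) :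
    coeff n (X * d⁄dX R f) = n * coeff n f := by
  cases n with
  | zero => simp
  | succ n => rw [coeff_succ_X_mul, coeff_derivative, mul_comm]; push_cast; rfl

theorem X_pow_dvd_derivative {f : R⟦X⟧} {n : ℕ} (h : X ^ (n + 1) ∣ f) : X ^ n ∣ d⁄dX R f := by
  rw [X_pow_dvd_iff] at h ⊢
  intro m hm
  rw [coeff_derivative, h (m + 1) (by omega), zero_mul]

end CommSemiring

theorem coeff_derivative_mul_eq_of_X_pow_dvd_sub {R : Type*} [CommRing R] {f g : R⟦X⟧} {n : ℕ}
    (h : X ^ (n + 1) ∣ f - g) (w : R⟦X⟧) {j : ℕ} (hj : j < n) :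
    coeff j (d⁄dX R f * w) = coeff j (d⁄dX R g * w) := by
  have := X_pow_dvd_iff.mp (dvd_mul_of_dvd_left (X_pow_dvd_derivative h) w) j hj
  rwa [map_sub, sub_mul, map_sub, sub_eq_zero] at this

section Field

variable {K : Type*} [Field K] [CharZero K]

theorem coeff_inv_pow_add_X_mul_derivative (u : K⟦X⟧) (j : ℕ) :
    coeff j (u⁻¹ ^ j + X * d⁄dX K u * u⁻¹ ^ (j + 1)) = if j = 0 then 1 else 0 := by
  rcases Nat.eq_zero_or_pos j with rfl | hj
  · simp
  -- the second summand is `-X (u⁻¹ ^ j)' / j`, whose `j`-th coefficient cancels the first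
  have hderiv : X * d⁄dX K (u⁻¹ ^ j) = -(j : K⟦X⟧) * (X * d⁄dX K u * u⁻¹ ^ (j + 1)) := by
    rw [derivative_pow, derivative_inv']
    obtain ⟨i, rfl⟩ : ∃ i, j = i + 1 := ⟨j - 1, by omega⟩
    simp only [Nat.add_sub_cancel]
    ring
  have hcoeff := congrArg (coeff j) hderiv
  rw [coeff_X_mul_derivative, ← map_natCast C, ← map_neg, coeff_C_mul] at hcoeff
  have hj0 : (j : K) ≠ 0 := by exact_mod_cast hj.ne'
  rw [if_neg hj.ne', map_add]
  apply mul_left_cancel₀ hj0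
  linear_combination hcoeff

theorem coeff_pred_derivative_X_mul_pow_mul_inv_pow {u : K⟦X⟧} (hu : constantCoeff u ≠ 0)
    {m n : ℕ} (hmn : m ≤ n) :
    coeff (n - 1) (d⁄dX K ((X * u) ^ m) * u⁻¹ ^ n) = if m = n then (n : K) else 0 := by
  rcases m with _ | m
  · rcases n with _ | n <;> simp
  obtain ⟨j, rfl⟩ : ∃ j, n = m + 1 + j := ⟨n - (m + 1), by omega⟩
  have huv (i : ℕ) : (u * u⁻¹) ^ i = 1 := by rw [PowerSeries.mul_inv_cancel u hu, one_pow]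
  have hsplit : d⁄dX K ((X * u) ^ (m + 1)) * u⁻¹ ^ (m + 1 + j)
      = X ^ m * ((m + 1 : K⟦X⟧) * (u⁻¹ ^ j + X * d⁄dX K u * u⁻¹ ^ (j + 1))) := by
    rw [derivative_pow, Derivation.leibniz, derivative_X]
    simp only [Nat.add_sub_cancel, smul_eq_mul, mul_one, Nat.cast_add, Nat.cast_one]
    linear_combination (X ^ m * (m + 1 : K⟦X⟧)) *
      (u⁻¹ ^ j * huv (m + 1) + X * d⁄dX K u * u⁻¹ ^ (j + 1) * huv m)
  rw [hsplit, show m + 1 + j - 1 = j + m by omega, coeff_X_pow_mul, ← Nat.cast_succ,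
    ← map_natCast C, coeff_C_mul, coeff_inv_pow_add_X_mul_derivative]
  rcases Nat.eq_zero_or_pos j with rfl | hj
  · simp
  · simp [hj.ne']

end Field

end PowerSeries

theorem psComp_eq_subst {f g : ℚ⟦X⟧} (hg : constantCoeff g = 0) : psComp f g = f.subst g := by
  ext n
  rw [psComp, coeff_mk, coeff_subst' (HasSubst.of_constantCoeff_zero' hg),
    finsum_eq_sum_of_support_subset (s := range (n + 1))]
  · simp only [smul_eq_mul]
  · intro d hd
    rw [Function.mem_support] at hd
    rw [coe_range, Set.mem_Iio]
    by_contra! hnd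
    exact hd (by rw [coeff_pow_eq_zero_of_lt hg (by omega), smul_zero])

theorem X_pow_dvd_psComp_sub_sum {f g : ℚ⟦X⟧} (hg : constantCoeff g = 0) (n : ℕ) :
    X ^ (n + 1) ∣ psComp f g - ∑ m ∈ range (n + 1), coeff m f • g ^ m := by
  refine X_pow_dvd_iff.mpr fun j hj => ?_
  rw [map_sub, map_sum, psComp, coeff_mk, sub_eq_zero]
  simp only [map_smul, smul_eq_mul]
  refine sum_subset (range_subset_range.mpr (by omega)) fun m hm hmj => ?_
  rw [mem_range] at hm hmj
  rw [coeff_pow_eq_zero_of_lt hg (by omega), mul_zero]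

theorem lagrange_inversion_general (u G : PowerSeries ℚ)
    (hu : PowerSeries.constantCoeff u ≠ 0)
    (hGH : psComp G (PowerSeries.X * u) = PowerSeries.X)
    (n k : ℕ) (hk : 1 ≤ k) (hkn : k ≤ n) :
    (n : ℚ) * PowerSeries.coeff n (G ^ k) =
      (k : ℚ) * PowerSeries.coeff (n - k) (u⁻¹ ^ n) := by
  set H := X * u
  have hH : constantCoeff H = 0 := by simp [H]
  have hGk : psComp (G ^ k) H = X ^ k := by
    rw [psComp_eq_subst hH] at hGH ⊢
    rw [subst_pow (HasSubst.of_constantCoeff_zero' hH), hGH]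
  set T := ∑ m ∈ range (n + 1), coeff m (G ^ k) • H ^ m
  have hT := coeff_derivative_mul_eq_of_X_pow_dvd_sub
    (hGk ▸ X_pow_dvd_psComp_sub_sum hH n) (u⁻¹ ^ n) (j := n - 1) (by omega)
  calc (n : ℚ) * coeff n (G ^ k)
      = ∑ m ∈ range (n + 1), coeff m (G ^ k) * coeff (n - 1) (d⁄dX ℚ (H ^ m) * u⁻¹ ^ n) := by
        rw [sum_congr rfl fun m hm => by
          rw [coeff_pred_derivative_X_mul_pow_mul_inv_pow hu (mem_range_succ_iff.mp hm)]]
        rw [sum_eq_single_of_mem n (self_mem_range_succ n) fun m _ hmn => by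
          rw [if_neg hmn, mul_zero], if_pos rfl, mul_comm]
    _ = coeff (n - 1) (d⁄dX ℚ T * u⁻¹ ^ n) := by
        simp only [T, map_sum, Derivation.map_smul, sum_mul, smul_mul_assoc, map_smul, smul_eq_mul]
    _ = coeff (n - 1) (d⁄dX ℚ (X ^ k) * u⁻¹ ^ n) := hT.symm
    _ = k * coeff (n - k) (u⁻¹ ^ n) := by
        rw [derivative_pow, derivative_X, mul_one, ← map_natCast C, mul_assoc, coeff_C_mul,
          coeff_X_pow_mul', if_pos (by omega), show n - 1 - (k - 1) = n - k by omega]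

/-- Lagrange inversion: if `H = X·u` with `u(0) ≠ 0` and `G` (with `G(0) = 0`) is a
compositional left inverse of `H`, i.e. `G(H(X)) = X`, then
`n·[Xⁿ](G^k) = k·[X^{n-k}](u^{-n})` for `1 ≤ k ≤ n`. -/
theorem lagrange_inversion (u G : PowerSeries ℚ)
    (hu : PowerSeries.constantCoeff u ≠ 0)
    (hG0 : PowerSeries.constantCoeff G = 0)
    (hGH : psComp G (PowerSeries.X * u) = PowerSeries.X)
    (n k : ℕ) (hk : 1 ≤ k) (hkn : k ≤ n) :
    (n : ℚ) * PowerSeries.coeff n (G ^ k) =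
      (k : ℚ) * PowerSeries.coeff (n - k) (u⁻¹ ^ n) :=
  lagrange_inversion_general u G hu hGH n k hk hkn
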